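/- arXiv:2403.04213 — 3 statements merged into one kernel-verified Lean document; each statement's English description precedes it below -/
import Mathlib

section
/- Ω_Vir(λ₁, α₁) ≅ Ω_Vir(λ₂, α₂) as Vir-modules if and only if λ₁ = λ₂ and α₁ = α₂. -/
open Polynomial

/-- The action of the Virasoro basis element `L_i` on `ℂ[t]`:
`(L_i f)(t) = λ^i (t - iα) f(t - i)`. -/
noncomputable def virL (lam α : ℂ) (i : ℤ) (f : ℂ[X]) : ℂ[X] :=
  C (lam ^ i) * (X - C ((i : ℂ) * α)) * f.comp (X - C (i : ℂ))

lemma virL_zero (lam α : ℂ) (f : ℂ[X]) : virL lam α 0 f = X * f := by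
  simp [virL]

/-- `Ω_Vir(λ₁, α₁) ≅ Ω_Vir(λ₂, α₂)` as Vir-modules iff
`λ₁ = λ₂` and `α₁ = α₂`. -/
theorem stmt_7 (lam₁ lam₂ α₁ α₂ : ℂ) (h₁ : lam₁ ≠ 0) (h₂ : lam₂ ≠ 0) :
    (∃ e : ℂ[X] ≃ₗ[ℂ] ℂ[X],
        ∀ (i : ℤ) (f : ℂ[X]), e (virL lam₁ α₁ i f) = virL lam₂ α₂ i (e f)) ↔
      (lam₁ = lam₂ ∧ α₁ = α₂) := by
  constructor
  · rintro ⟨e, he⟩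
    -- e commutes with multiplication by X
    have hX : ∀ r : ℂ[X], e (X * r) = X * e r := by
      intro r
      have := he 0 r
      rwa [virL_zero, virL_zero] at this
    -- e is ℂ[X]-linear
    have hmul : ∀ p q : ℂ[X], e (p * q) = p * e q := by
      intro p q
      induction p using Polynomial.induction_on with
      | C a =>
        have : C a * q = a • q := by rw [smul_eq_C_mul]
        rw [this, map_smul, smul_eq_C_mul]
      | add p r hp hr => rw [add_mul, map_add, hp, hr, add_mul]
      | monomial n a ih =>
        have h1 : C a * X ^ (n + 1) * q = X * (C a * X ^ n * q) := by ring
        rw [h1, hX, ih]; ring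
    have hone : ∀ p : ℂ[X], e p = p * e 1 := by
      intro p; rw [← hmul p 1, mul_one]
    -- e 1 is a unit
    have hunit : IsUnit (e 1) := by
      have h1 : (1 : ℂ[X]) = e.symm 1 * e 1 := by
        have := hone (e.symm 1)
        rw [e.apply_symm_apply] at this
        exact this
      exact IsUnit.of_mul_eq_one _ (mul_comm (e.symm 1) (e 1) ▸ h1.symm)
    obtain ⟨c, hc0, hc⟩ := Polynomial.isUnit_iff.mp hunit
    have key := he 1 1
    have hE : ∀ p : ℂ[X], e p = p * C c := by
      intro p; rw [hone, ← hc]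
    rw [hE, hE] at key
    -- compute both sides
    have lhs : virL lam₁ α₁ 1 1 * C c = C lam₁ * (X - C α₁) * C c := by
      simp [virL]
    have rhs : virL lam₂ α₂ 1 ((1 : ℂ[X]) * C c) = C lam₂ * (X - C α₂) * C c := by
      simp [virL]
    rw [lhs, rhs] at key
    have hcC : (C c : ℂ[X]) ≠ 0 := by simpa using hc0.ne_zero
    have key2 : C lam₁ * (X - C α₁) = C lam₂ * (X - C α₂) :=
      mul_right_cancel₀ hcC key
    have hl : lam₁ = lam₂ := by
      have := congrArg (fun p => Polynomial.coeff p 1) key2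
      simpa [mul_sub, coeff_sub] using this
    refine ⟨hl, ?_⟩
    have := congrArg (fun p => Polynomial.coeff p 0) key2
    simp [mul_sub, coeff_sub] at this
    rw [hl] at this
    exact mul_left_cancel₀ h₂ this
  · rintro ⟨rfl, rfl⟩
    exact ⟨LinearEquiv.refl ℂ ℂ[X], fun i f => rfl⟩
end

section
/- In the Lie algebra W(1) with bracket [L_{i,m}, L_{j,n}] = (j−i)L_{i+j,m+n} + (m−n)L_{i+j,m+n−1}, the set {L_{i,0}, L_{i,1} : i ∈ ℤ} generates W(1) as a Lie algebra. -/
/-- The bracket of `W(1)` on the free vector space with basis `{L_{i,m} : i ∈ ℤ, m ∈ ℕ}`: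
`[L_{i,m}, L_{j,n}] = (j-i) L_{i+j,m+n} + (m-n) L_{i+j,m+n-1}`. -/
noncomputable def W1bracket (x y : (ℤ × ℕ) →₀ ℂ) : (ℤ × ℕ) →₀ ℂ :=
  x.sum fun p a => y.sum fun q b =>
    (a * b) • (((q.1 - p.1 : ℤ) : ℂ) • Finsupp.single (p.1 + q.1, p.2 + q.2) (1 : ℂ) +
      (((p.2 : ℤ) - (q.2 : ℤ) : ℤ) : ℂ) • Finsupp.single (p.1 + q.1, p.2 + q.2 - 1) (1 : ℂ))

/-- Membership in the Lie subalgebra of `W(1)` generated by the elements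
`L_{i,0}` and `L_{i,1}` (`i ∈ ℤ`): closed under scalar multiples, sums and brackets. -/
inductive W1gen : ((ℤ × ℕ) →₀ ℂ) → Prop
  | base0 (i : ℤ) : W1gen (Finsupp.single (i, 0) 1)
  | base1 (i : ℤ) : W1gen (Finsupp.single (i, 1) 1)
  | smul (c : ℂ) {x : (ℤ × ℕ) →₀ ℂ} : W1gen x → W1gen (c • x)
  | add {x y : (ℤ × ℕ) →₀ ℂ} : W1gen x → W1gen y → W1gen (x + y)
  | br {x y : (ℤ × ℕ) →₀ ℂ} : W1gen x → W1gen y → W1gen (W1bracket x y)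

/-! Bracketing with `L_{j,1}` raises the second index:
`[L_{j,1}, L_{k,m}] = (k-j) L_{j+k,m+1} + (1-m) L_{j+k,m}`.
So if every `L_{k,m}` is generated, then `L_{i,m+1}` is generated: write `i = j + k` with
`k ≠ j` and subtract the `L_{i,m}` term; induct on `m`. -/

lemma W1bracket_single_single (p q : ℤ × ℕ) :
    W1bracket (Finsupp.single p 1) (Finsupp.single q 1) =
      ((q.1 - p.1 : ℤ) : ℂ) • Finsupp.single (p.1 + q.1, p.2 + q.2) (1 : ℂ) +
      (((p.2 : ℤ) - (q.2 : ℤ) : ℤ) : ℂ) • Finsupp.single (p.1 + q.1, p.2 + q.2 - 1) (1 : ℂ) := by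
  unfold W1bracket
  rw [Finsupp.sum_single_index, Finsupp.sum_single_index] <;> simp

lemma W1bracket_single_one_single (j k : ℤ) (m : ℕ) :
    W1bracket (Finsupp.single (j, 1) 1) (Finsupp.single (k, m) 1) =
      ((k - j : ℤ) : ℂ) • Finsupp.single (j + k, m + 1) 1 +
      ((1 - m : ℤ) : ℂ) • Finsupp.single (j + k, m) 1 := by
  rw [W1bracket_single_single, Nat.add_comm 1 m, Nat.add_sub_cancel]
  rfl

lemma W1gen.sub {x y : (ℤ × ℕ) →₀ ℂ} (hx : W1gen x) (hy : W1gen y) : W1gen (x - y) := by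
  simpa [sub_eq_add_neg] using hx.add (hy.smul (-1))

lemma exists_add_eq_and_ne (i : ℤ) : ∃ j k : ℤ, j + k = i ∧ k ≠ j := by
  rcases eq_or_ne i 0 with rfl | hi
  · exact ⟨-1, 1, by norm_num, by norm_num⟩
  · exact ⟨0, i, zero_add i, hi⟩

lemma W1gen_single_succ (m : ℕ) (h : ∀ k : ℤ, W1gen (Finsupp.single (k, m) 1)) (i : ℤ) :
    W1gen (Finsupp.single (i, m + 1) 1) := by
  obtain ⟨j, k, rfl, hkj⟩ := exists_add_eq_and_ne i
  have hcoef : ((k - j : ℤ) : ℂ) ≠ 0 := Int.cast_ne_zero.mpr (sub_ne_zero.mpr hkj)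
  have hbr := ((W1gen.base1 j).br (h k)).sub ((h (j + k)).smul ((1 - m : ℤ) : ℂ))
  rw [W1bracket_single_one_single, add_sub_cancel_right] at hbr
  simpa only [smul_smul, inv_mul_cancel₀ hcoef, one_smul] using hbr.smul ((k - j : ℤ) : ℂ)⁻¹

/-- `{L_{i,0}, L_{i,1} : i ∈ ℤ}` generates `W(1)` as a Lie algebra:
every basis element `L_{i,m}` lies in the Lie subalgebra they generate. -/
theorem stmt_9 : ∀ (i : ℤ) (m : ℕ), W1gen (Finsupp.single (i, m) 1) := by
  intro i m
  induction m generalizing i with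
  | zero => exact W1gen.base0 i
  | succ m ih => exact W1gen_single_succ m ih i
end

section
/- Let λ ∈ ℂ*, α, β ∈ ℂ, and define operators on ℂ[t] by L_{i,1}·t^k = λ^i(α − iαβ + βt)(t−i)^k + kλ^i(t−iα)(t−i)^{k−1} and L_{i,2}·t^k = λ^iβ(2α − iαβ + βt)(t−i)^k + 2kλ^i(α − iαβ + βt)(t−i)^{k−1} + k(k−1)λ^i(t−iα)(t−i)^{k−2}. Then L_{i,1}·L_{j,1}·t^k − L_{j,1}·L_{i,1}·t^k = (j−i)L_{i+j,2}·t^k for all i, j ∈ ℤ, k ∈ ℕ. -/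
/-!
On an arbitrary polynomial, `L_{i,1}` acts as
`p ↦ λ^i ((α - iαβ + βt) p(t - i) + (t - iα) p'(t - i))`, and `L_{i,2}` as the analogous
second-order operator. For these closed forms the commutator identity holds for every `p`: it
becomes a polynomial identity in `p(t - i - j)` and its first two derivatives, once
`λ^(i+j) = λ^i λ^j` (which needs `λ ≠ 0`).
-/

open Polynomial

section
variable {R : Type*} [CommRing R]

lemma comp_X_sub_C_comp_X_sub_C (p : R[X]) (a b : R) :
    (p.comp (X - C a)).comp (X - C b) = p.comp (X - C (a + b)) := by
  rw [comp_assoc, sub_comp, X_comp, C_comp, map_add, sub_sub, add_comm (C b)]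

lemma derivative_comp_X_sub_C (p : R[X]) (a : R) :
    derivative (p.comp (X - C a)) = (derivative p).comp (X - C a) := by
  simp [derivative_comp]

lemma natCast_mul_natCast_pred (k : ℕ) : (k : R) * ((k - 1 : ℕ) : R) = k * (k - 1) := by
  cases k <;> simp

end

section
variable {K : Type*} [Field K]

noncomputable def diffOp1 (lam α β : K) (i : ℤ) (p : K[X]) : K[X] :=
  C (lam ^ i) * ((C (α - i * α * β) + C β * X) * p.comp (X - C (i : K))
    + (X - C (i * α)) * (derivative p).comp (X - C (i : K)))

noncomputable def diffOp2 (lam α β : K) (i : ℤ) (p : K[X]) : K[X] :=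
  C (lam ^ i) * (C β * (C (2 * α - i * α * β) + C β * X) * p.comp (X - C (i : K))
    + 2 * (C (α - i * α * β) + C β * X) * (derivative p).comp (X - C (i : K))
    + (X - C (i * α)) * (derivative (derivative p)).comp (X - C (i : K)))

theorem diffOp1_X_pow (lam α β : K) (i : ℤ) (k : ℕ) :
    diffOp1 lam α β i (X ^ k) =
      C (lam ^ i) * (C (α - (i : K) * α * β) + C β * X) * (X - C (i : K)) ^ k
        + (k : K) • (C (lam ^ i) * (X - C ((i : K) * α)) * (X - C (i : K)) ^ (k - 1)) := by
  simp only [diffOp1, derivative_X_pow, mul_comp, X_pow_comp, C_comp, smul_eq_C_mul]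
  ring

theorem diffOp2_X_pow (lam α β : K) (i : ℤ) (k : ℕ) :
    diffOp2 lam α β i (X ^ k) =
      C (lam ^ i) * C β * (C (2 * α - (i : K) * α * β) + C β * X) * (X - C (i : K)) ^ k
        + (2 * (k : K)) • (C (lam ^ i) * (C (α - (i : K) * α * β) + C β * X) *
          (X - C (i : K)) ^ (k - 1))
        + ((k : K) * ((k : K) - 1)) • (C (lam ^ i) * (X - C ((i : K) * α)) *
          (X - C (i : K)) ^ (k - 2)) := by
  simp only [diffOp2, derivative_X_pow, derivative_C_mul, mul_comp, X_pow_comp, C_comp,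
    smul_eq_C_mul, Nat.sub_sub, ← natCast_mul_natCast_pred k]
  simp only [map_mul, map_ofNat]
  ring

theorem eq_diffOp1_of_apply_X_pow (lam α β : K) (i : ℤ) (L : K[X] →ₗ[K] K[X])
    (hL : ∀ k : ℕ, L (X ^ k) = diffOp1 lam α β i (X ^ k)) (p : K[X]) :
    L p = diffOp1 lam α β i p := by
  induction p using Polynomial.induction_on' with
  | add p q hp hq =>
    rw [map_add, hp, hq]
    simp only [diffOp1, map_add, add_comp]
    ring
  | monomial n a =>
    rw [← C_mul_X_pow_eq_monomial, ← smul_eq_C_mul, map_smul, hL]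
    simp only [diffOp1, smul_eq_C_mul, derivative_C_mul, mul_comp, C_comp]
    ring

theorem diffOp1_commutator {lam : K} (hlam : lam ≠ 0) (α β : K) (i j : ℤ) (p : K[X]) :
    diffOp1 lam α β i (diffOp1 lam α β j p) - diffOp1 lam α β j (diffOp1 lam α β i p) =
      ((j - i : ℤ) : K) • diffOp2 lam α β (i + j) p := by
  have hji : (j : K) + i = i + j := add_comm _ _
  simp only [diffOp1, diffOp2, derivative_mul, derivative_add, derivative_sub, derivative_C,
    derivative_X, derivative_comp_X_sub_C, mul_comp, add_comp, sub_comp, C_comp, X_comp,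
    comp_X_sub_C_comp_X_sub_C, zero_comp, one_comp, zpow_add₀ hlam, smul_eq_C_mul, Int.cast_add,
    hji]
  simp only [map_add, map_sub, map_mul, Int.cast_sub, map_ofNat]
  ring

end

/-- if linear operators `L1 i = L_{i,1}` and `L2 i = L_{i,2}` on `ℂ[t]`
act on monomials by
`L_{i,1}·t^k = λ^i(α - iαβ + βt)(t-i)^k + kλ^i(t-iα)(t-i)^{k-1}` and
`L_{i,2}·t^k = λ^iβ(2α - iαβ + βt)(t-i)^k + 2kλ^i(α - iαβ + βt)(t-i)^{k-1}
  + k(k-1)λ^i(t-iα)(t-i)^{k-2}`,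
then `L_{i,1}·L_{j,1}·t^k - L_{j,1}·L_{i,1}·t^k = (j-i)L_{i+j,2}·t^k`. -/
theorem stmt_11 (lam α β : ℂ) (hlam : lam ≠ 0)
    (L1 L2 : ℤ → ℂ[X] →ₗ[ℂ] ℂ[X])
    (hL1 : ∀ (i : ℤ) (k : ℕ),
      L1 i (X ^ k) = C (lam ^ i) * (C (α - (i : ℂ) * α * β) + C β * X) * (X - C (i : ℂ)) ^ k
        + (k : ℂ) • (C (lam ^ i) * (X - C ((i : ℂ) * α)) * (X - C (i : ℂ)) ^ (k - 1)))
    (hL2 : ∀ (i : ℤ) (k : ℕ),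
      L2 i (X ^ k) = C (lam ^ i) * C β * (C (2 * α - (i : ℂ) * α * β) + C β * X) *
          (X - C (i : ℂ)) ^ k
        + (2 * (k : ℂ)) • (C (lam ^ i) * (C (α - (i : ℂ) * α * β) + C β * X) *
          (X - C (i : ℂ)) ^ (k - 1))
        + ((k : ℂ) * ((k : ℂ) - 1)) • (C (lam ^ i) * (X - C ((i : ℂ) * α)) *
          (X - C (i : ℂ)) ^ (k - 2))) :
    ∀ (i j : ℤ) (k : ℕ),
      L1 i (L1 j (X ^ k)) - L1 j (L1 i (X ^ k)) =
        ((j - i : ℤ) : ℂ) • L2 (i + j) (X ^ k) := by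
  have hL1_eq : ∀ i p, L1 i p = diffOp1 lam α β i p := fun i =>
    eq_diffOp1_of_apply_X_pow lam α β i (L1 i) fun k => (hL1 i k).trans (diffOp1_X_pow ..).symm
  intro i j k
  rw [hL1_eq, hL1_eq, hL1_eq, hL1_eq, hL2, ← diffOp2_X_pow, diffOp1_commutator hlam]
end
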